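/- Let k > ℓ ≥ t+2 and n ≥ max{2·L(k,t), t+1+(k-t)(ℓ-t)} where L(k,t) = (t+1)+(k-t+1)·log₂((t+1)(k-t+1)). Define r₁(n,k,ℓ,t) = (Σ_{j=1}^{ℓ-t} (-1)^{j-1}·C(ℓ-t,j)·S(n-t-j, k-t-j))·(S(n-t, ℓ-t) + t). Then r₁(n,k,ℓ,t) > r₁(n,ℓ,k,t). -/

import Mathlib

/-- Stirling number of the second kind. -/
def stirling : ℕ → ℕ → ℕ
  | 0, 0 => 1
  | 0, _ + 1 => 0
  | _ + 1, 0 => 0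
  | n + 1, k + 1 => stirling n k + (k + 1) * stirling n (k + 1)

/-- `L(k,t) = (t+1) + (k-t+1)·log₂((t+1)(k-t+1))`. -/
noncomputable def Lfun (k t : ℕ) : ℝ :=
  ((t : ℝ) + 1) + ((k : ℝ) - t + 1) * Real.logb 2 (((t : ℝ) + 1) * ((k : ℝ) - t + 1))

/-- `r₁(n,k,ℓ,t) = (Σ_{j=1}^{ℓ-t} (-1)^{j-1}·C(ℓ-t,j)·S(n-t-j,k-t-j))·(S(n-t,ℓ-t)+t)`. -/
def r1 (n k l t : ℕ) : ℤ :=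
  (∑ j ∈ Finset.Icc 1 (l - t),
      (-1 : ℤ) ^ (j - 1) * Nat.choose (l - t) j * stirling (n - t - j) (k - t - j)) *
    ((stirling (n - t) (l - t) : ℤ) + t)

/-!
Write `a = k - t`, `b = l - t`, `N = n - t`. The first factor of `r₁` is an alternating sum whose
terms decrease, so it lies between its first term and its first term minus its second. Since `N`
exceeds `a log a` by a large enough factor, every `S(M, c)` that occurs is within a factor `7/8`
of `c ^ M / c!` (in the surjection count `c ^ M = ∑ c↓j S(M, j)` the terms with `j < c` are
negligible), so everything reduces to `576 a (a (b - 1)) ^ (N - 1) < 343 b (b (a - 1)) ^ (N - 1)`,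
which Bernoulli's inequality gives as soon as `N > a b`.
-/

open Finset
open scoped Nat

lemma pow_eq_sum_descFactorial_mul_stirling (c M : ℕ) :
    c ^ M = ∑ j ∈ range (c + 1), c.descFactorial j * stirling M j := by
  induction M with
  | zero =>
    rw [sum_range_succ']
    simp [stirling, sum_eq_zero]
  | succ M ih =>
    -- the recurrence of `stirling`, read backwards
    have hdesc : ∀ j, c * c.descFactorial j = c.descFactorial (j + 1) + j * c.descFactorial j := by
      intro j
      rcases le_or_gt j c with hj | hj
      · rw [Nat.descFactorial_succ, ← add_mul, Nat.sub_add_cancel hj]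
      · simp [Nat.descFactorial_of_lt hj]
    calc c ^ (M + 1)
        = ∑ j ∈ range (c + 1), c.descFactorial (j + 1) * stirling M j
          + ∑ j ∈ range (c + 1), j * c.descFactorial j * stirling M j := by
          rw [pow_succ', ih, mul_sum, ← sum_add_distrib]
          refine sum_congr rfl fun j _ => ?_
          rw [← mul_assoc, hdesc]; ring
      _ = ∑ j ∈ range c, c.descFactorial (j + 1) * stirling M j
          + ∑ j ∈ range c, c.descFactorial (j + 1) * ((j + 1) * stirling M (j + 1)) := by
          rw [sum_range_succ, Nat.descFactorial_of_lt (Nat.lt_succ_self c), sum_range_succ' _ c]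
          simp only [zero_mul, add_zero]
          congr 1
          refine sum_congr rfl fun j _ => ?_
          ring
      _ = ∑ j ∈ range (c + 1), c.descFactorial j * stirling (M + 1) j := by
          rw [sum_range_succ' _ c, ← sum_add_distrib]
          simp [stirling, mul_add]

lemma factorial_mul_stirling_le_pow (M c : ℕ) : c ! * stirling M c ≤ c ^ M := by
  rw [pow_eq_sum_descFactorial_mul_stirling, ← Nat.descFactorial_self]
  exact single_le_sum (f := fun j => c.descFactorial j * stirling M j) (fun _ _ => Nat.zero_le _)
    (self_mem_range_succ c)

lemma two_pow_div_mul_pow_le (s M : ℕ) : 2 ^ (M / s) * s ^ M ≤ (s + 1) ^ M := by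
  rcases Nat.eq_zero_or_pos s with rfl | hs
  · cases M <;> simp
  have hbase : 2 * s ^ s ≤ (s + 1) ^ s := by
    have := pow_add_mul_le_add_pow (a := s) (b := 1) (Nat.zero_le _) (Nat.zero_le _) s
    rwa [Nat.cast_id, mul_one, ← pow_succ', Nat.sub_add_cancel hs, ← two_mul] at this
  calc 2 ^ (M / s) * s ^ M = (2 * s ^ s) ^ (M / s) * s ^ (M % s) := by
        rw [mul_pow, ← pow_mul, mul_assoc, ← pow_add, Nat.div_add_mod]
    _ ≤ ((s + 1) ^ s) ^ (M / s) * (s + 1) ^ (M % s) := by gcongr; omega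
    _ = (s + 1) ^ M := by rw [← pow_mul, ← pow_add, Nat.div_add_mod]

lemma le_two_pow_div_of_two_mul_pow_le {K s M : ℕ} (hs : 0 < s) (h : (2 * K) ^ s ≤ 2 ^ M) :
    K ≤ 2 ^ (M / s) := by
  have : (2 * K) ^ s < (2 ^ (M / s + 1)) ^ s :=
    h.trans_lt <| by
      rw [← pow_mul]
      exact Nat.pow_lt_pow_right (by norm_num) (by nlinarith [Nat.lt_div_mul_add (a := M) hs])
  have := lt_of_pow_lt_pow_left₀ s (Nat.zero_le _) this
  rw [pow_succ] at this
  omega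

lemma mul_pow_le_succ_pow {K s M : ℕ} (hs : 0 < s) (h : (2 * K) ^ s ≤ 2 ^ M) :
    K * s ^ M ≤ (s + 1) ^ M :=
  (Nat.mul_le_mul_right _ (le_two_pow_div_of_two_mul_pow_le hs h)).trans
    (two_pow_div_mul_pow_le s M)

lemma sum_range_succ_le_two_mul (f : ℕ → ℕ) {n : ℕ} (h : ∀ i < n, 2 * f i ≤ f (i + 1)) :
    ∑ i ∈ range (n + 1), f i ≤ 2 * f n := by
  induction n with
  | zero => simp; omega
  | succ n ih =>
    rw [sum_range_succ]
    have := ih fun i hi => h i (by omega)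
    have := h n (by omega)
    omega

lemma two_mul_choose_mul_pow_le {c j M : ℕ} (hj : 0 < j) (hjc : j < c)
    (h : (4 * c) ^ j ≤ 2 ^ M) : 2 * (c.choose j * j ^ M) ≤ c.choose (j + 1) * (j + 1) ^ M := by
  have hK : (2 * c) * j ^ M ≤ (j + 1) ^ M := mul_pow_le_succ_pow hj (by rwa [← mul_assoc])
  refine Nat.le_of_mul_le_mul_left (c := j + 1) ?_ (by omega)
  calc (j + 1) * (2 * (c.choose j * j ^ M)) = c.choose j * (2 * (j + 1) * j ^ M) := by ring
    _ ≤ c.choose j * ((c - j) * (j + 1) ^ M) := by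
      refine Nat.mul_le_mul_left _ ?_
      calc 2 * (j + 1) * j ^ M ≤ 2 * c * j ^ M := by gcongr; omega
        _ ≤ (j + 1) ^ M := hK
        _ ≤ (c - j) * (j + 1) ^ M := Nat.le_mul_of_pos_left _ (by omega)
    _ = (j + 1) * (c.choose (j + 1) * (j + 1) ^ M) := by
      rw [← mul_assoc, ← Nat.choose_succ_right_eq]
      ring

lemma seven_mul_pow_le_factorial_mul_stirling {M c : ℕ} (hc : 2 ≤ c)
    (h : (32 * c) ^ (c - 1) ≤ 2 ^ M) : 7 * c ^ M ≤ 8 * (c ! * stirling M c) := by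
  have hM : M ≠ 0 := by
    rintro rfl
    have : 32 * c ≤ (32 * c) ^ (c - 1) := Nat.le_self_pow (by omega) _
    omega
  -- the tail of `c ^ M = ∑ c↓j · S(M, j)` is dominated by `∑_{j < c} C(c, j) j ^ M`,
  -- whose terms at least double up to `j = c - 1`
  set T : ℕ → ℕ := fun j => c.choose j * j ^ M with hT
  have hdouble : ∀ j < c - 1, 2 * T j ≤ T (j + 1) := by
    intro j hj
    rcases Nat.eq_zero_or_pos j with rfl | hj0
    · simp [hT, hM]
    refine two_mul_choose_mul_pow_le hj0 (by omega) (le_trans ?_ h)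
    calc (4 * c) ^ j ≤ (32 * c) ^ j := Nat.pow_le_pow_left (by omega) _
      _ ≤ (32 * c) ^ (c - 1) := Nat.pow_le_pow_right (by omega) hj.le
  have htail : ∑ j ∈ range c, c.descFactorial j * stirling M j ≤ 2 * T (c - 1) := by
    calc ∑ j ∈ range c, c.descFactorial j * stirling M j ≤ ∑ j ∈ range (c - 1 + 1), T j := by
          rw [Nat.sub_add_cancel (by omega : 1 ≤ c)]
          refine sum_le_sum fun j _ => ?_
          rw [Nat.descFactorial_eq_factorial_mul_choose, mul_comm _ (c.choose j), mul_assoc]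
          exact Nat.mul_le_mul_left _ (factorial_mul_stirling_le_pow M j)
      _ ≤ 2 * T (c - 1) := sum_range_succ_le_two_mul T hdouble
  have hlast : 16 * T (c - 1) ≤ c ^ M := by
    have := mul_pow_le_succ_pow (K := 16 * c) (by omega : 0 < c - 1) (by rwa [← mul_assoc])
    rw [Nat.sub_add_cancel (by omega : 1 ≤ c)] at this
    simp only [hT, Nat.choose_symm_of_eq_add (by omega : c = c - 1 + 1), Nat.choose_one_right]
    linarith
  have hsplit := pow_eq_sum_descFactorial_mul_stirling c M
  rw [sum_range_succ, Nat.descFactorial_self] at hsplit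
  omega

lemma mul_stirling_le_stirling_succ {B M c : ℕ} (hc : 0 < c)
    (hlow : (32 * (c + 1)) ^ c ≤ 2 ^ (M + 1)) (hB : (4 * B) ^ c ≤ 2 ^ M) :
    B * stirling M c ≤ stirling (M + 1) (c + 1) := by
  have hlower := seven_mul_pow_le_factorial_mul_stirling (by omega : 2 ≤ c + 1) hlow
  have hupper := factorial_mul_stirling_le_pow M c
  have hratio := mul_pow_le_succ_pow (K := 2 * B) hc (by rwa [← mul_assoc])
  refine Nat.le_of_mul_le_mul_left (c := 8 * (c + 1)!) ?_ (by positivity)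
  calc 8 * (c + 1)! * (B * stirling M c) = 4 * (c + 1) * (2 * B * (c ! * stirling M c)) := by
        rw [Nat.factorial_succ]; ring
    _ ≤ 4 * (c + 1) * (2 * B * c ^ M) := by gcongr
    _ ≤ 4 * (c + 1) * (c + 1) ^ M := by gcongr
    _ ≤ 7 * (c + 1) ^ (M + 1) := by rw [pow_succ]; nlinarith [Nat.zero_le ((c + 1) ^ M * (c + 1))]
    _ ≤ 8 * (c + 1)! * stirling (M + 1) (c + 1) := by rw [mul_assoc]; exact hlower

lemma sum_range_succ_alternating (f : ℕ → ℕ) (n : ℕ) :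
    ∑ i ∈ range (n + 1), (-1 : ℤ) ^ i * f i = f 0 - ∑ i ∈ range n, (-1 : ℤ) ^ i * f (i + 1) := by
  rw [sum_range_succ', sub_eq_neg_add, ← sum_neg_distrib]
  simp [pow_succ]

lemma sum_range_alternating_mem_Icc (n : ℕ) : ∀ f : ℕ → ℕ, (∀ i, i + 1 < n → f (i + 1) ≤ f i) →
    ∑ i ∈ range n, (-1 : ℤ) ^ i * f i ∈ Set.Icc 0 (f 0 : ℤ) := by
  induction n with
  | zero => simp
  | succ n ih =>
    intro f hf
    obtain ⟨hlo, hhi⟩ := ih (fun i => f (i + 1)) fun i hi => hf (i + 1) (by omega)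
    rw [sum_range_succ_alternating]
    have : ∑ i ∈ range n, (-1 : ℤ) ^ i * f (i + 1) ≤ f 0 := by
      rcases Nat.eq_zero_or_pos n with rfl | hn
      · simp
      · exact hhi.trans (by exact_mod_cast hf 0 (by omega))
    constructor <;> linarith

lemma sub_le_sum_range_alternating {n : ℕ} (hn : 0 < n) (f : ℕ → ℕ)
    (hf : ∀ i, i + 1 < n → f (i + 1) ≤ f i) :
    (f 0 : ℤ) - f 1 ≤ ∑ i ∈ range n, (-1 : ℤ) ^ i * f i := by
  obtain ⟨n, rfl⟩ := Nat.exists_eq_add_of_lt hn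
  rw [zero_add, sum_range_succ_alternating]
  have := (sum_range_alternating_mem_Icc n (fun i => f (i + 1))
    fun i hi => hf (i + 1) (by omega)).2
  linarith

lemma choose_succ_mul_le_choose_mul {c j x y : ℕ} (h : c * y ≤ x) :
    c.choose (j + 1) * y ≤ c.choose j * x := by
  refine Nat.le_of_mul_le_mul_left (c := j + 1) ?_ (Nat.succ_pos j)
  calc (j + 1) * (c.choose (j + 1) * y) = c.choose j * ((c - j) * y) := by
        rw [← mul_assoc, mul_comm (j + 1), Nat.choose_succ_right_eq, mul_assoc]
    _ ≤ c.choose j * x := Nat.mul_le_mul_left _ ((Nat.mul_le_mul_right _ (Nat.sub_le c j)).trans h)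
    _ ≤ (j + 1) * (c.choose j * x) := Nat.le_mul_of_pos_left _ (Nat.succ_pos j)

/-- The first factor of `r1 n k l t` is `altStirlingSum (l - t) (k - t) (n - t)`. -/
def altStirlingSum (c d N : ℕ) : ℤ :=
  ∑ j ∈ Icc 1 c, (-1 : ℤ) ^ (j - 1) * c.choose j * stirling (N - j) (d - j)

lemma altStirlingSum_eq_sum_range (c d N : ℕ) :
    altStirlingSum c d N = ∑ i ∈ range c,
      (-1 : ℤ) ^ i * (c.choose (i + 1) * stirling (N - (i + 1)) (d - (i + 1)) : ℕ) := by
  rw [altStirlingSum, ← Ico_add_one_right_eq_Icc, sum_Ico_eq_sum_range, Nat.add_sub_cancel]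
  refine sum_congr rfl fun i _ => ?_
  rw [add_comm 1 i, Nat.add_sub_cancel]
  push_cast
  ring

section altStirlingSum

variable {c d N : ℕ} (hmono : ∀ j, 1 ≤ j → j < c →
  c * stirling (N - (j + 1)) (d - (j + 1)) ≤ stirling (N - j) (d - j))
include hmono

lemma altStirlingSum_le : altStirlingSum c d N ≤ c * stirling (N - 1) (d - 1) := by
  rw [altStirlingSum_eq_sum_range]
  refine ((sum_range_alternating_mem_Icc c _ fun i hi => ?_).2).trans (by simp)
  exact choose_succ_mul_le_choose_mul (hmono (i + 1) (by omega) hi)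

lemma seven_mul_le_eight_mul_altStirlingSum (hc : 2 ≤ c)
    (hsecond : 8 * (c.choose 2 * stirling (N - 2) (d - 2)) ≤ c * stirling (N - 1) (d - 1)) :
    7 * (c * stirling (N - 1) (d - 1) : ℤ) ≤ 8 * altStirlingSum c d N := by
  rw [altStirlingSum_eq_sum_range]
  have := sub_le_sum_range_alternating (by omega : 0 < c)
    (fun i => c.choose (i + 1) * stirling (N - (i + 1)) (d - (i + 1))) fun i hi =>
    choose_succ_mul_le_choose_mul (hmono (i + 1) (by omega) hi)
  simp only [Nat.choose_one_right, zero_add] at this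
  push_cast at this ⊢
  have : (8 * (c.choose 2 * stirling (N - 2) (d - 2)) : ℤ) ≤ c * stirling (N - 1) (d - 1) := by
    exact_mod_cast hsecond
  linarith

end altStirlingSum

lemma pow_mul_add_mul_le_mul_add_pow (m d P : ℕ) : m ^ P * (m + P * d) ≤ m * (m + d) ^ P := by
  rcases P with _ | P
  · simp
  have := pow_add_mul_le_add_pow (a := m) (b := d) (Nat.zero_le _) (Nat.zero_le _) (P + 1)
  simp only [Nat.cast_id, Nat.add_sub_cancel] at this
  calc m ^ (P + 1) * (m + (P + 1) * d) = m * (m ^ (P + 1) + (P + 1) * m ^ P * d) := by ring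
    _ ≤ m * (m + d) ^ (P + 1) := Nat.mul_le_mul_left _ this

lemma mul_pow_mul_pred_pow_lt {a b N : ℕ} (hb : 2 ≤ b) (hba : b < a) (hN : a * b < N) :
    576 * a ^ N * (b - 1) ^ (N - 1) < 343 * b ^ N * (a - 1) ^ (N - 1) := by
  obtain ⟨P, rfl⟩ := Nat.exists_eq_add_of_lt (by nlinarith : 0 < N)
  obtain ⟨c, rfl⟩ := Nat.exists_eq_add_of_le' (by omega : 1 ≤ b)
  obtain ⟨d, rfl⟩ := Nat.exists_eq_add_of_lt hba
  simp only [zero_add, Nat.add_sub_cancel]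
  -- with `m = a (b - 1)` and `b (a - 1) = m + (d + 1)`, Bernoulli bounds `(1 + (d + 1) / m) ^ P`
  -- below by `1 + P (d + 1) / m`, and `P ≥ a b` makes this beat `576 a / (343 b)`
  set m := (c + 1 + d + 1) * c with hm
  have hmd : (c + 1) * (c + 1 + d + 1 - 1) = m + (d + 1) := by
    simp only [hm, Nat.add_sub_cancel]; ring
  have hbern := pow_mul_add_mul_le_mul_add_pow m (d + 1) P
  have hpoly : 576 * (c + 1 + d + 1) * m < 343 * (c + 1) * (m + P * (d + 1)) := by
    have hP : (c + 1 + d + 1) * (c + 1) ≤ P := by omega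
    have hcore : 576 * (c + 1 + d + 1) * c < 343 * (c + 1) * (c + (c + 1) * (d + 1)) := by
      nlinarith [Nat.zero_le (d * c * c), Nat.zero_le (d * c)]
    calc 576 * (c + 1 + d + 1) * m = (c + 1 + d + 1) * (576 * (c + 1 + d + 1) * c) := by ring
      _ < (c + 1 + d + 1) * (343 * (c + 1) * (c + (c + 1) * (d + 1))) :=
        Nat.mul_lt_mul_of_pos_left hcore (by omega)
      _ = 343 * (c + 1) * (m + (c + 1 + d + 1) * (c + 1) * (d + 1)) := by ring
      _ ≤ 343 * (c + 1) * (m + P * (d + 1)) := by gcongr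
  have hmpos : 0 < m := Nat.mul_pos (by omega) (by omega)
  refine Nat.lt_of_mul_lt_mul_left (a := m) ?_
  calc m * (576 * (c + 1 + d + 1) ^ (P + 1) * c ^ P)
      = m ^ P * (576 * (c + 1 + d + 1) * m) := by rw [hm, mul_pow]; ring
    _ < m ^ P * (343 * (c + 1) * (m + P * (d + 1))) :=
      Nat.mul_lt_mul_of_pos_left hpoly (Nat.pow_pos hmpos)
    _ ≤ 343 * (c + 1) * (m * (m + (d + 1)) ^ P) := by nlinarith
    _ = m * (343 * (c + 1) ^ (P + 1) * (c + 1 + d + 1 - 1) ^ P) := by rw [← hmd, mul_pow]; ring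

lemma eight_mul_lt_seven_mul_of_bounds {a b N u s u₁ w : ℕ} (ha : 1 ≤ a) (hb : 1 ≤ b)
    (hu : 7 * b ^ N ≤ 8 * (b ! * u)) (hs : 7 * (a - 1) ^ (N - 1) ≤ 8 * ((a - 1)! * s))
    (hu₁ : (b - 1)! * u₁ ≤ (b - 1) ^ (N - 1)) (hw : 8 * (a ! * w) ≤ 9 * a ^ N)
    (hpow : 576 * a ^ N * (b - 1) ^ (N - 1) < 343 * b ^ N * (a - 1) ^ (N - 1)) :
    8 * (a * u₁ * w) < 7 * (b * s * u) := by
  obtain ⟨a, rfl⟩ := Nat.exists_eq_add_of_le' ha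
  obtain ⟨b, rfl⟩ := Nat.exists_eq_add_of_le' hb
  simp only [Nat.add_sub_cancel, Nat.factorial_succ] at *
  refine Nat.lt_of_mul_lt_mul_left (a := 64 * (a ! * b !)) ?_
  calc 64 * (a ! * b !) * (8 * ((a + 1) * u₁ * w))
      = 64 * ((b ! * u₁) * (8 * ((a + 1) * a ! * w))) := by ring
    _ ≤ 64 * (b ^ (N - 1) * (9 * (a + 1) ^ N)) := by gcongr
    _ = 576 * (a + 1) ^ N * b ^ (N - 1) := by ring
    _ < 343 * (b + 1) ^ N * a ^ (N - 1) := hpow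
    _ = 7 * ((7 * a ^ (N - 1)) * (7 * (b + 1) ^ N)) := by ring
    _ ≤ 7 * ((8 * (a ! * s)) * (8 * ((b + 1) * b ! * u))) := by gcongr
    _ = 64 * (a ! * b !) * (7 * ((b + 1) * s * u)) := by ring

section LargeN

variable {a b N : ℕ} (hpow : (64 * a) ^ a ≤ 2 ^ N)
include hpow

lemma pow_le_two_pow_of_le {K e M : ℕ} (hK : K ≤ 32 * a) (he : e < a) (hM : N - a ≤ M) :
    K ^ e ≤ 2 ^ M := by
  have : K ^ e * 2 ^ a ≤ 2 ^ (N - a) * 2 ^ a :=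
    calc K ^ e * 2 ^ a ≤ (32 * a) ^ a * 2 ^ a :=
          Nat.mul_le_mul_right _
            ((Nat.pow_le_pow_left hK e).trans (Nat.pow_le_pow_right (by omega) he.le))
      _ = (64 * a) ^ a := by rw [← mul_pow]; ring
      _ ≤ 2 ^ N := hpow
      _ ≤ 2 ^ (N - a) * 2 ^ a := by
          rw [← pow_add]; exact Nat.pow_le_pow_right (by norm_num) (by omega)
  exact (Nat.le_of_mul_le_mul_right this (by positivity)).trans
    (Nat.pow_le_pow_right (by norm_num) hM)

lemma mul_stirling_le_stirling_of_pow_le {B c M : ℕ} (hB : B ≤ 8 * a) (hc : 1 < c)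
    (hca : c ≤ a) (hM : N - a < M) : B * stirling (M - 1) (c - 1) ≤ stirling M c := by
  obtain ⟨c, rfl⟩ := Nat.exists_eq_add_of_lt hc
  obtain ⟨M, rfl⟩ := Nat.exists_eq_add_of_le' (by omega : 1 ≤ M)
  simpa using mul_stirling_le_stirling_succ (by omega)
    (pow_le_two_pow_of_le hpow (by omega) (by omega) (by omega))
    (pow_le_two_pow_of_le hpow (by omega) (by omega) (by omega))

lemma seven_mul_pow_le_factorial_mul_stirling_of_pow_le {c M : ℕ} (hc : 2 ≤ c) (hca : c ≤ a)
    (hM : N - a ≤ M) : 7 * c ^ M ≤ 8 * (c ! * stirling M c) :=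
  seven_mul_pow_le_factorial_mul_stirling hc (pow_le_two_pow_of_le hpow (by omega) (by omega) hM)

lemma altStirlingSum_le_of_pow_le (hba : b < a) (hNa : a < N) :
    altStirlingSum a b N ≤ a * stirling (N - 1) (b - 1) := by
  refine altStirlingSum_le fun j hj hja => ?_
  rcases lt_or_ge (j + 1) b with hjb | hjb
  · have := mul_stirling_le_stirling_of_pow_le hpow (B := a) (c := b - j) (M := N - j)
      (by omega) (by omega) (by omega) (by omega)
    rwa [show N - j - 1 = N - (j + 1) by omega, show b - j - 1 = b - (j + 1) by omega] at this
  · rw [Nat.sub_eq_zero_of_le hjb, show N - (j + 1) = N - (j + 2) + 1 by omega]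
    simp [stirling]

lemma seven_mul_le_eight_mul_altStirlingSum_of_pow_le (hb : 2 ≤ b) (hba : b < a) (hNa : a < N) :
    7 * (b * stirling (N - 1) (a - 1) : ℤ) ≤ 8 * altStirlingSum b a N := by
  refine seven_mul_le_eight_mul_altStirlingSum (fun j hj hjb => ?_) hb ?_
  · have := mul_stirling_le_stirling_of_pow_le hpow (B := b) (c := a - j) (M := N - j)
      (by omega) (by omega) (by omega) (by omega)
    rwa [show N - j - 1 = N - (j + 1) by omega, show a - j - 1 = a - (j + 1) by omega] at this
  · have hratio := mul_stirling_le_stirling_of_pow_le hpow (B := 4 * (b - 1)) (c := a - 1)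
      (M := N - 1) (by omega) (by omega) (by omega) (by omega)
    rw [show N - 1 - 1 = N - 2 by omega, show a - 1 - 1 = a - 2 by omega] at hratio
    have hchoose : b.choose 2 * 2 = b * (b - 1) := by simpa using Nat.choose_succ_right_eq b 1
    calc 8 * (b.choose 2 * stirling (N - 2) (a - 2))
        = 4 * (b.choose 2 * 2) * stirling (N - 2) (a - 2) := by ring
      _ = b * (4 * (b - 1) * stirling (N - 2) (a - 2)) := by rw [hchoose]; ring
      _ ≤ b * stirling (N - 1) (a - 1) := Nat.mul_le_mul_left _ hratio

end LargeN

lemma eight_mul_factorial_mul_stirling_add_le {a t N : ℕ} (ha : 2 ≤ a)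
    (hpow : 2 ^ t * (64 * a) ^ a ≤ 2 ^ N) : 8 * (a ! * (stirling N a + t)) ≤ 9 * a ^ N := by
  have hS := factorial_mul_stirling_le_pow N a
  have ht : 8 * (a ! * t) ≤ a ^ N :=
    calc 8 * (a ! * t) ≤ 8 * (a ^ a * 2 ^ t) :=
          Nat.mul_le_mul_left _ (Nat.mul_le_mul (Nat.factorial_le_pow a) t.lt_two_pow_self.le)
      _ = 2 ^ t * (8 * a ^ a) := by ring
      _ ≤ 2 ^ t * (64 ^ a * a ^ a) := by
          gcongr
          exact (show 8 ≤ 64 by norm_num).trans (Nat.le_self_pow (by omega) 64)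
      _ = 2 ^ t * (64 * a) ^ a := by rw [mul_pow]
      _ ≤ 2 ^ N := hpow
      _ ≤ a ^ N := Nat.pow_le_pow_left ha N
  linarith

theorem altStirlingSum_mul_lt {a b t N : ℕ} (hb : 2 ≤ b) (hba : b < a) (hN : a * b < N)
    (hpow : 2 ^ t * (64 * a) ^ a ≤ 2 ^ N) :
    altStirlingSum a b N * (stirling N a + t) < altStirlingSum b a N * (stirling N b + t) := by
  have hpow' : (64 * a) ^ a ≤ 2 ^ N := le_trans (Nat.le_mul_of_pos_left _ (by positivity)) hpow
  have hNa : a < N := by nlinarith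
  have hkey := eight_mul_lt_seven_mul_of_bounds (by omega) (by omega)
    (seven_mul_pow_le_factorial_mul_stirling_of_pow_le hpow' hb hba.le (by omega))
    (seven_mul_pow_le_factorial_mul_stirling_of_pow_le hpow' (by omega) (by omega) (by omega))
    (factorial_mul_stirling_le_pow _ _) (eight_mul_factorial_mul_stirling_add_le (by omega) hpow)
    (mul_pow_mul_pred_pow_lt hb hba hN)
  have hkey' : (8 * (a * stirling (N - 1) (b - 1) * (stirling N a + t)) : ℤ)
      < 7 * (b * stirling (N - 1) (a - 1) * stirling N b) := by exact_mod_cast hkey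
  have hA := seven_mul_le_eight_mul_altStirlingSum_of_pow_le hpow' hb hba hNa
  have hA' := mul_le_mul_of_nonneg_right hA (by positivity : (0 : ℤ) ≤ stirling N b)
  calc altStirlingSum a b N * (stirling N a + t)
      ≤ a * stirling (N - 1) (b - 1) * (stirling N a + t) :=
        mul_le_mul_of_nonneg_right (altStirlingSum_le_of_pow_le hpow' hba hNa) (by positivity)
    _ < altStirlingSum b a N * stirling N b := by linarith
    _ ≤ altStirlingSum b a N * (stirling N b + t) :=
        mul_le_mul_of_nonneg_left (by simp) (by nlinarith)

lemma sixteen_pow_le (a : ℕ) : 16 ^ a ≤ 16 * (a + 1) ^ (a + 2) := by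
  rcases lt_or_ge a 15 with ha | ha
  · interval_cases a <;> norm_num
  · calc 16 ^ a ≤ (a + 1) ^ a := Nat.pow_le_pow_left (by omega) a
      _ ≤ 16 * (a + 1) ^ (a + 2) :=
        (Nat.pow_le_pow_right (by omega) (by omega)).trans (Nat.le_mul_of_pos_left _ (by norm_num))

lemma two_pow_mul_pow_le {t : ℕ} (ht : 1 ≤ t) (a : ℕ) :
    2 ^ t * (64 * a) ^ a ≤ 2 ^ (t + 2) * ((t + 1) * (a + 1)) ^ (2 * a + 2) := by
  calc 2 ^ t * (64 * a) ^ a = 2 ^ t * (2 ^ (2 * a) * (16 ^ a * a ^ a)) := by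
        rw [pow_mul, ← mul_pow, ← mul_pow, ← mul_assoc]; norm_num
    _ ≤ 2 ^ t * (2 ^ (2 * a) * (16 * (a + 1) ^ (a + 2) * (a + 1) ^ a)) := by
        gcongr
        · exact sixteen_pow_le a
        · omega
    _ = 2 ^ (t + 2) * (2 * (a + 1)) ^ (2 * a + 2) := by rw [mul_pow]; ring
    _ ≤ 2 ^ (t + 2) * ((t + 1) * (a + 1)) ^ (2 * a + 2) := by gcongr; omega

lemma two_pow_mul_pow_le_two_pow_of_two_mul_Lfun_le {n k t : ℕ} (htk : t ≤ k)
    (h : 2 * Lfun k t ≤ n) :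
    2 ^ (t + 2) * ((t + 1) * (k - t + 1)) ^ (2 * (k - t) + 2) ≤ 2 ^ (n - t) := by
  rw [Lfun] at h
  have hkt : (t : ℝ) ≤ k := by exact_mod_cast htk
  have hlogP : 0 ≤ Real.logb 2 (((t : ℝ) + 1) * ((k : ℝ) - t + 1)) :=
    Real.logb_nonneg one_lt_two (by nlinarith)
  have htn : t ≤ n := by exact_mod_cast (show (t : ℝ) ≤ n by nlinarith)
  set P : ℝ := (((t + 1) * (k - t + 1) : ℕ) : ℝ) with hP
  have hlog : Real.logb 2 (2 ^ (t + 2) * P ^ (2 * (k - t) + 2)) ≤ ((n - t : ℕ) : ℝ) := by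
    rw [Real.logb_mul (by positivity) (by positivity), Real.logb_pow, Real.logb_pow,
      Real.logb_self_eq_one one_lt_two, hP]
    push_cast [htk, htn]
    nlinarith
  rw [Real.logb_le_iff_le_rpow one_lt_two (by positivity), Real.rpow_natCast, hP] at hlog
  exact_mod_cast hlog

theorem stmt_19 (n k l t : ℕ) (ht : 1 ≤ t) (hlt : t + 2 ≤ l) (hkl : l < k)
    (hn : (n : ℝ) ≥ max (2 * Lfun k t) ((t : ℝ) + 1 + ((k : ℝ) - t) * ((l : ℝ) - t))) :
    r1 n k l t > r1 n l k t := by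
  have hab : (k - t) * (l - t) < n - t := by
    have h := (le_max_right _ _).trans hn
    have : ((t + 1 + (k - t) * (l - t) : ℕ) : ℝ) ≤ n := by
      push_cast [(by omega : t ≤ k), (by omega : t ≤ l)]
      linarith
    have := Nat.cast_le.mp this
    omega
  have hpow := (two_pow_mul_pow_le ht (k - t)).trans
    (two_pow_mul_pow_le_two_pow_of_two_mul_Lfun_le (by omega) ((le_max_left _ _).trans hn))
  exact altStirlingSum_mul_lt (by omega) (by omega) hab hpow
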